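/- Let V be a ℚ-vector space with a symmetric ℚ-bilinear form x·y. On triples (r,f,t) ∈ ℚ × V × ℚ define the product (r,f,t)*(r',f',t') = (rr', rf' + r'f, rt' + r't + f·f'), for x ∈ V set ch(x) = (1, x, (x·x)/2), and set χ(r,f,t) = 2r + t. Let h, d₁, d₂ ∈ V satisfy h·h = 2, d₁·d₁ = −2, d₂·d₂ = −2, d₁·d₂ = 0, h·d₁ = 1, h·d₂ = 3, and set ℓ = d₁ + d₂ − 2h. Then for any f ∈ V and r, t ∈ ℚ, writing F = (r,f,t), the triple χ(F*ch(d₁−h))·ch(d₂−2d₁+h) + χ(F*ch(d₂−h))·ch(h−d₁) − F*ch(d₂−h)*ch(h−d₁) equals (−r + f·ℓ + 2t, −f + (f·(d₁−h))(d₂−2d₁+h) + (f·(d₂−h))(h−d₁) + t(d₂−3d₁+2h), −2 f·ℓ − 5t). -/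

import Mathlib

/-- Cup product of Chern-character triples `(ch₀, ch₁, ∫ch₂)` on a K3 surface. -/
def mukaiMul {V : Type*} [AddCommGroup V] [Module ℚ V]
    (B : V →ₗ[ℚ] V →ₗ[ℚ] ℚ) (x y : ℚ × V × ℚ) : ℚ × V × ℚ :=
  (x.1 * y.1, x.1 • y.2.1 + y.1 • x.2.1, x.1 * y.2.2 + y.1 * x.2.2 + B x.2.1 y.2.1)

/-- Chern character of a line bundle with first Chern class `x`. -/
def chLine {V : Type*} [AddCommGroup V] [Module ℚ V]
    (B : V →ₗ[ℚ] V →ₗ[ℚ] ℚ) (x : V) : ℚ × V × ℚ :=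
  (1, x, B x x / 2)

/-- Euler characteristic via Riemann–Roch on a K3 surface. -/
def chiK3 {V : Type*} [AddCommGroup V] [Module ℚ V] (x : ℚ × V × ℚ) : ℚ :=
  2 * x.1 + x.2.2


/-!
The line-bundle factors `ch(d₂ - h) * ch(h - d₁)` collapse to `ch(d₂ - d₁)` because the product is
associative and `ch` is multiplicative. After that, `F * ch(x)` and `χ(F * ch(x))` are explicit in
`r, f, t` and the pairing `f · x`, so each component is linear in `r, t` and the pairings of `f`,
with coefficients given by the intersection numbers of `h, d₁, d₂`.
-/

section Mukai

variable {V : Type*} [AddCommGroup V] [Module ℚ V] (B : V →ₗ[ℚ] V →ₗ[ℚ] ℚ)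

theorem mukaiMul_assoc (x y z : ℚ × V × ℚ) :
    mukaiMul B (mukaiMul B x y) z = mukaiMul B x (mukaiMul B y z) := by
  obtain ⟨r, f, t⟩ := x
  obtain ⟨r', f', t'⟩ := y
  obtain ⟨r'', f'', t''⟩ := z
  simp only [mukaiMul, map_add, map_smul, LinearMap.add_apply, LinearMap.smul_apply, smul_eq_mul,
    Prod.mk.injEq]
  refine ⟨by ring, by module, by ring⟩

theorem chLine_mul_chLine (hsym : ∀ x y : V, B x y = B y x) (x y : V) :
    mukaiMul B (chLine B x) (chLine B y) = chLine B (x + y) := by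
  simp only [mukaiMul, chLine, one_smul, one_mul, map_add, LinearMap.add_apply, hsym y x,
    Prod.mk.injEq, add_comm y x, true_and]
  ring

theorem mukaiMul_chLine (r t : ℚ) (f x : V) :
    mukaiMul B (r, f, t) (chLine B x) = (r, r • x + f, r * (B x x / 2) + t + B f x) := by
  simp only [mukaiMul, chLine, mul_one, one_smul, one_mul]

theorem chiK3_mukaiMul_chLine (r t : ℚ) (f x : V) :
    chiK3 (mukaiMul B (r, f, t) (chLine B x)) = r * (2 + B x x / 2) + B f x + t := by
  rw [mukaiMul_chLine, chiK3]
  ring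

end Mukai

/-- The type II Chern character computation in Theorem 5.3 (degenerate reflexive K3 surface
of type II: `h·h = 2`, `dᵢ·dᵢ = −2`, `d₁·d₂ = 0`, `h·d₁ = 1`, `h·d₂ = 3`,
`ℓ = d₁ + d₂ − 2h`). -/
theorem stmt_8 {V : Type*} [AddCommGroup V] [Module ℚ V]
    (B : V →ₗ[ℚ] V →ₗ[ℚ] ℚ) (hsym : ∀ x y : V, B x y = B y x)
    (h d₁ d₂ : V) (hhh : B h h = 2) (hd₁ : B d₁ d₁ = -2) (hd₂ : B d₂ d₂ = -2)
    (hd₁d₂ : B d₁ d₂ = 0) (hhd₁ : B h d₁ = 1) (hhd₂ : B h d₂ = 3)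
    (ℓ : V) (hl : ℓ = d₁ + d₂ - (2 : ℚ) • h)
    (f : V) (r t : ℚ) :
    (chiK3 (mukaiMul B (r, f, t) (chLine B (d₁ - h)))) •
        chLine B (d₂ - (2 : ℚ) • d₁ + h) +
      (chiK3 (mukaiMul B (r, f, t) (chLine B (d₂ - h)))) • chLine B (h - d₁) -
      mukaiMul B (mukaiMul B (r, f, t) (chLine B (d₂ - h))) (chLine B (h - d₁)) =
    (-r + B f ℓ + 2 * t,
      -f + (B f (d₁ - h)) • (d₂ - (2 : ℚ) • d₁ + h) + (B f (d₂ - h)) • (h - d₁) +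
        t • (d₂ - (3 : ℚ) • d₁ + (2 : ℚ) • h),
      -2 * B f ℓ - 5 * t) := by
  subst hl
  rw [mukaiMul_assoc, chLine_mul_chLine B hsym, sub_add_sub_cancel, chiK3_mukaiMul_chLine,
    chiK3_mukaiMul_chLine, mukaiMul_chLine]
  have sq_d₁_sub_h : B (d₁ - h) (d₁ - h) = -2 := by norm_num [hhh, hd₁, hhd₁, hsym d₁ h]
  have sq_d₂_sub_h : B (d₂ - h) (d₂ - h) = -6 := by norm_num [hhh, hd₂, hhd₂, hsym d₂ h]
  have sq_d₂_sub_d₁ : B (d₂ - d₁) (d₂ - d₁) = -4 := by norm_num [hd₁, hd₂, hd₁d₂, hsym d₂ d₁]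
  have sq_h_sub_d₁ : B (h - d₁) (h - d₁) = -2 := by norm_num [hhh, hd₁, hhd₁, hsym d₁ h]
  have sq_d₂_sub_two_d₁_add_h : B (d₂ - (2 : ℚ) • d₁ + h) (d₂ - (2 : ℚ) • d₁ + h) = -6 := by
    norm_num [hhh, hd₁, hd₂, hd₁d₂, hhd₁, hhd₂, hsym d₂ d₁, hsym d₁ h, hsym d₂ h]
  simp only [chLine]
  rw [sq_d₁_sub_h, sq_d₂_sub_h, sq_d₂_sub_d₁, sq_h_sub_d₁, sq_d₂_sub_two_d₁_add_h]
  simp only [Prod.smul_mk, Prod.mk_add_mk, Prod.mk_sub_mk, smul_eq_mul,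
    map_add, map_sub, map_smul, Prod.mk.injEq]
  refine ⟨by ring, by module, by ring⟩
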